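/- arXiv:2602.01514 — 5 statements merged into one kernel-verified Lean document; each statement's English description precedes it below -/
import Mathlib

section
/- Let p₀ ∈ ℝ² and let K ⊂ ℝ² be a compact convex set containing, for every p ∈ K, the closed disk with diameter p₀p. Then K is strictly convex, i.e. its boundary contains no nondegenerate line segment. -/
/-- The closed disk with diameter segment `p₀ p`. -/
noncomputable def diamBall (p₀ p : EuclideanSpace ℝ (Fin 2)) :
    Set (EuclideanSpace ℝ (Fin 2)) :=
  Metric.closedBall (midpoint ℝ p₀ p) (dist p p₀ / 2)

open scoped RealInnerProductSpace

lemma mem_int_diamBall (p₀ p z : EuclideanSpace ℝ (Fin 2))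
    (h : ⟪z - p₀, z - p⟫ < 0) : z ∈ interior (diamBall p₀ p) := by
  apply Metric.ball_subset_interior_closedBall
  rw [Metric.mem_ball, dist_eq_norm]
  set a := z - p₀ with ha
  set b := z - p with hb
  have h1 : z - midpoint ℝ p₀ p = (2:ℝ)⁻¹ • (a + b) := by
    rw [midpoint_eq_smul_add, invOf_eq_inv, ha, hb]; module
  have h2 : dist p p₀ = ‖a - b‖ := by
    rw [dist_eq_norm]; congr 1; rw [ha, hb]; module
  rw [h1, h2, norm_smul]
  have h3 := norm_add_sq_real a b
  have h4 := norm_sub_sq_real a b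
  have h5 : ‖a + b‖ < ‖a - b‖ := by
    apply lt_of_pow_lt_pow_left₀ 2 (norm_nonneg _)
    nlinarith
  rw [Real.norm_eq_abs, abs_of_pos (by norm_num)]
  linarith

/-- A compact convex planar set containing the disk with diameter `p₀ p` for each of
its points `p` is strictly convex: its boundary contains no nondegenerate segment. -/
theorem diametric_sweep_strictly_convex (p₀ : EuclideanSpace ℝ (Fin 2))
    (K : Set (EuclideanSpace ℝ (Fin 2))) (hK : IsCompact K) (hconv : Convex ℝ K)
    (hsweep : ∀ p ∈ K, diamBall p₀ p ⊆ K) :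
    ∀ x ∈ frontier K, ∀ y ∈ frontier K, x ≠ y → ¬ segment ℝ x y ⊆ frontier K := by
  intro x hx y hy hxy hseg
  have hKc : IsClosed K := hK.isClosed
  have hsubK : frontier K ⊆ K := hKc.frontier_subset
  have hxK : x ∈ K := hsubK hx
  have hyK : y ∈ K := hsubK hy
  set m := midpoint ℝ x y with hm
  have hmseg : m ∈ segment ℝ x y := midpoint_mem_segment x y
  have hmK : m ∈ K := hsubK (hseg hmseg)
  have hxm : x ≠ m := by
    intro h
    exact hxy ((midpoint_eq_left_iff (R := ℝ)).mp h.symm)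
  have key : ∀ q ∈ K, ∀ z ∈ segment ℝ x y, ⟪z - p₀, z - q⟫ < 0 → False := by
    intro q hq z hz hlt
    have hzi : z ∈ interior K :=
      interior_mono (hsweep q hq) (mem_int_diamBall p₀ q z hlt)
    exact (hseg hz).2 hzi
  have hmx : ‖m - x‖ ≠ 0 := by
    simpa [sub_eq_zero] using fun h => hxm h.symm
  by_cases hp₀ : p₀ = m
  · -- use m' = midpoint m x
    set m' := midpoint ℝ m x with hm'
    have hm'seg : m' ∈ segment ℝ x y :=
      (convex_segment x y).segment_subset hmseg (left_mem_segment ℝ x y)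
        (midpoint_mem_segment m x)
    refine key x hxK m' hm'seg ?_
    have e1 : m' - p₀ = (2:ℝ)⁻¹ • (x - m) := by
      rw [hp₀, hm', midpoint_eq_smul_add, invOf_eq_inv]; module
    have e2 : m' - x = -((2:ℝ)⁻¹ • (x - m)) := by
      rw [hm', midpoint_eq_smul_add, invOf_eq_inv]; module
    rw [e1, e2, inner_neg_right, real_inner_self_eq_norm_sq]
    have : (0:ℝ) < ‖(2:ℝ)⁻¹ • (x - m)‖ := by
      rw [norm_smul]
      exact mul_pos (by norm_num) (norm_pos_iff.mpr (sub_ne_zero.mpr hxm))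
    nlinarith
  · rcases lt_trichotomy (⟪m - p₀, m - x⟫) 0 with hc | hc | hc
    · exact key x hxK m hmseg hc
    · -- perpendicular case
      have hpm : p₀ - m ≠ 0 := sub_ne_zero.mpr hp₀
      have hnpm : (0:ℝ) < ‖m - p₀‖ := by
        rw [norm_sub_rev]; exact norm_pos_iff.mpr hpm
      set f : EuclideanSpace ℝ (Fin 2) := ‖p₀ - m‖⁻¹ • (p₀ - m) with hf
      set r : ℝ := dist x p₀ / 2 with hr
      set q : EuclideanSpace ℝ (Fin 2) := midpoint ℝ p₀ x - r • f with hq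
      have hn' : (0:ℝ) < ‖p₀ - m‖ := norm_pos_iff.mpr hpm
      have hnf : ‖f‖ = 1 := by
        rw [hf, norm_smul, Real.norm_eq_abs, abs_of_pos (inv_pos.mpr hn')]
        field_simp
      have hrpos : 0 ≤ r := by positivity
      have hqmem : q ∈ diamBall p₀ x := by
        rw [diamBall, Metric.mem_closedBall, dist_eq_norm]
        have : q - midpoint ℝ p₀ x = -(r • f) := by rw [hq]; module
        rw [this, norm_neg, norm_smul, hnf, Real.norm_eq_abs, abs_of_nonneg hrpos]
        simp [hr]
      have hqK : q ∈ K := hsweep x hxK hqmem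
      refine key q hqK m hmseg ?_
      have e1 : m - q = (2:ℝ)⁻¹ • ((m - p₀) + (m - x)) + r • f := by
        rw [hq, midpoint_eq_smul_add, invOf_eq_inv]; module
      have e2 : ⟪m - p₀, m - q⟫ =
          (2:ℝ)⁻¹ * (‖m - p₀‖^2 + ⟪m - p₀, m - x⟫) + r * ⟪m - p₀, f⟫ := by
        rw [e1, inner_add_right, real_inner_smul_right, real_inner_smul_right,
          inner_add_right, real_inner_self_eq_norm_sq]
      have e3 : ⟪m - p₀, f⟫ = -‖m - p₀‖ := by
        rw [hf, real_inner_smul_right]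
        have hneg : (p₀ - m) = -(m - p₀) := by module
        rw [hneg, inner_neg_right, real_inner_self_eq_norm_sq, norm_neg]
        field_simp [hnpm.ne']
      have e4 : ‖m - p₀‖ < dist x p₀ := by
        have h5 : (x - m) + (m - p₀) = x - p₀ := by module
        have h6 := norm_add_sq_real (x - m) (m - p₀)
        rw [h5] at h6
        have h7 : ⟪x - m, m - p₀⟫ = 0 := by
          have hx' : x - m = -(m - x) := by module
          rw [hx', inner_neg_left, real_inner_comm (m - p₀) (m - x), hc, neg_zero]
        have h8 : (0:ℝ) < ‖x - m‖ := by
          rw [norm_sub_rev]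
          exact lt_of_le_of_ne (norm_nonneg _) (Ne.symm hmx)
        rw [dist_eq_norm]
        apply lt_of_pow_lt_pow_left₀ 2 (norm_nonneg _)
        nlinarith [h6, h7, h8]
      rw [e2, e3, hc]
      have : 2 * r = dist x p₀ := by rw [hr]; ring
      nlinarith
    · refine key y hyK m hmseg ?_
      have hxy' : m - y = -(m - x) := by
        rw [hm, midpoint_eq_smul_add, invOf_eq_inv]; module
      rw [hxy', inner_neg_right]; linarith
end

section
/- Let V be a 3-dimensional real inner product space, let ℓ, ℓ' be distinct non-orthogonal lines through the origin in V, and fix a nonzero p' ∈ ℓ'. Then the set of points P_π(p'), as π ranges over all 2-dimensional subspaces of V containing ℓ, equals the circle with diameter segment p p' (where p = P_ℓ(p')) lying in the affine plane through p orthogonal to ℓ. -/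
open Module Submodule

/-- Orthogonal projection onto a subspace, as an endomorphism of the ambient space. -/
noncomputable def orthProj {𝕜 V : Type*} [RCLike 𝕜] [NormedAddCommGroup V]
    [InnerProductSpace 𝕜 V] [FiniteDimensional 𝕜 V] (π : Submodule 𝕜 V) : V →ₗ[𝕜] V :=
  π.subtype ∘ₗ (orthogonalProjection π).toLinearMap

lemma orthProj_apply {𝕜 V : Type*} [RCLike 𝕜] [NormedAddCommGroup V]
    [InnerProductSpace 𝕜 V] [FiniteDimensional 𝕜 V] (π : Submodule 𝕜 V) (v : V) :
    orthProj π v = (orthogonalProjection π v : V) := rfl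

/-- The orthogonal projections of a fixed nonzero `p' ∈ ℓ'` onto the 2-planes
containing `ℓ` sweep out exactly the circle with diameter `p p'` (where
`p = P_ℓ p'`) lying in the affine plane through `p` orthogonal to `ℓ`. -/
theorem projection_locus_is_circle {V : Type*} [NormedAddCommGroup V]
    [InnerProductSpace ℝ V] [FiniteDimensional ℝ V] (hV : finrank ℝ V = 3)
    (ℓ ℓ' : Submodule ℝ V) (hℓ : finrank ℝ ℓ = 1) (hℓ' : finrank ℝ ℓ' = 1)
    (hne : ℓ ≠ ℓ') (hnonorth : ¬ ℓ ≤ ℓ'ᗮ)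
    (p' : V) (hp' : p' ∈ ℓ') (hp'0 : p' ≠ 0) :
    {x : V | ∃ π : Submodule ℝ V, finrank ℝ π = 2 ∧ ℓ ≤ π ∧ x = orthProj π p'}
      = {x : V | x - orthProj ℓ p' ∈ ℓᗮ ∧
          inner ℝ (x - orthProj ℓ p') (x - p') = (0 : ℝ)} := by
  set p : V := orthProj ℓ p' with hpdef
  have hpmem : p ∈ ℓ := (orthogonalProjection ℓ p').2
  have hsub : p' - p ∈ ℓᗮ := Submodule.sub_starProjection_mem_orthogonal p'
  ext x
  simp only [Set.mem_setOf_eq]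
  constructor
  · rintro ⟨π, hπ2, hℓπ, rfl⟩
    set y : V := orthProj π p' with hy
    have hymem : y ∈ π := (orthogonalProjection π p').2
    have hyo : p' - y ∈ πᗮ := Submodule.sub_starProjection_mem_orthogonal p'
    constructor
    · intro v hv
      have h1 : inner ℝ v (p' - y) = (0 : ℝ) := hyo v (hℓπ hv)
      have h2 : inner ℝ v (p' - p) = (0 : ℝ) := hsub v hv
      rw [show y - p = (p' - p) - (p' - y) by abel, inner_sub_right, h1, h2, sub_zero]
    · have hmem : y - p ∈ π := Submodule.sub_mem _ hymem (hℓπ hpmem)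
      have h1 : inner ℝ (y - p) (p' - y) = (0 : ℝ) := hyo _ hmem
      rw [show y - p' = -(p' - y) by abel, inner_neg_right, h1, neg_zero]
  · rintro ⟨hx1, hx2⟩
    by_cases hxp : x = p
    · have hpp' : p' ≠ p := by
        intro h
        have hp'ℓ : p' ∈ ℓ := h ▸ hpmem
        have hspan : ℓ' = ℝ ∙ p' :=
          (Submodule.eq_of_le_of_finrank_le ((span_singleton_le_iff_mem _ _).2 hp')
            (by rw [hℓ', finrank_span_singleton hp'0])).symm
        exact hne (Submodule.eq_of_le_of_finrank_le
          (hspan ▸ (span_singleton_le_iff_mem _ _).2 hp'ℓ) (by rw [hℓ, hℓ'])).symm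
      have hd : p' - p ≠ 0 := sub_ne_zero.2 hpp'
      refine ⟨(ℝ ∙ (p' - p))ᗮ, ?_, ?_, ?_⟩
      · have h1 : finrank ℝ (ℝ ∙ (p' - p)) = 1 := finrank_span_singleton hd
        have := (ℝ ∙ (p' - p)).finrank_add_finrank_orthogonal
        omega
      · have hle : (ℝ ∙ (p' - p)) ≤ ℓᗮ := (span_singleton_le_iff_mem _ _).2 hsub
        exact le_trans ℓ.le_orthogonal_orthogonal (Submodule.orthogonal_le hle)
      · rw [hxp, orthProj_apply]
        refine (Submodule.eq_starProjection_of_mem_orthogonal ?_ ?_).symm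
        · have hle : (ℝ ∙ (p' - p)) ≤ ℓᗮ := (span_singleton_le_iff_mem _ _).2 hsub
          exact le_trans ℓ.le_orthogonal_orthogonal (Submodule.orthogonal_le hle) hpmem
        · exact (ℝ ∙ (p' - p)).le_orthogonal_orthogonal (mem_span_singleton_self _)
    · set u : V := x - p with hu
      have hu0 : u ≠ 0 := sub_ne_zero.2 hxp
      have huℓ : (ℝ ∙ u) ≤ ℓᗮ := (span_singleton_le_iff_mem _ _).2 hx1
      have hinf : ℓ ⊓ (ℝ ∙ u) = ⊥ := by
        refine le_bot_iff.1 (le_trans (inf_le_inf_left ℓ huℓ) ?_)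
        rw [Submodule.inf_orthogonal_eq_bot]
      refine ⟨ℓ ⊔ (ℝ ∙ u), ?_, le_sup_left, ?_⟩
      · have := Submodule.finrank_sup_add_finrank_inf_eq ℓ (ℝ ∙ u)
        rw [hinf, finrank_bot, hℓ, finrank_span_singleton hu0] at this
        omega
      · rw [orthProj_apply]
        refine (Submodule.eq_starProjection_of_mem_orthogonal ?_ ?_).symm
        · rw [show x = p + u by rw [hu]; abel]
          exact Submodule.add_mem _ (le_sup_left (a := ℓ) hpmem)
            ((le_sup_right : (ℝ ∙ u) ≤ _) (mem_span_singleton_self u))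
        · intro w hw
          rw [Submodule.mem_sup] at hw
          obtain ⟨a, ha, b, hb, rfl⟩ := hw
          obtain ⟨c, rfl⟩ := mem_span_singleton.1 hb
          have h1 : inner ℝ a (p' - x) = (0 : ℝ) := by
            rw [show p' - x = (p' - p) - u by rw [hu]; abel, inner_sub_right,
              hsub a ha, huℓ (mem_span_singleton_self u) a ha, sub_zero]
          have h2 : inner ℝ u (p' - x) = (0 : ℝ) := by
            rw [show p' - x = -(x - p') by abel, inner_neg_right, show u = x - p from hu,
              hx2, neg_zero]
          rw [inner_add_left, h1, inner_smul_left, h2]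
          simp
end

section
/- Let V be a 3-dimensional real Hilbert space. If S ⊆ ℙ(V) is τ₂-saturated and contains two distinct lines, then S contains two distinct non-orthogonal lines. -/
open Module Submodule
open scoped RealInnerProductSpace

/-- `τ_d`-saturation of a set `S` of `r`-planes: whenever `η, η' ∈ S` and
`τ_d(η, η' ∣ η'')` holds (i.e. `η''` is an `r`-plane arising as the orthogonal
projection of `η'` onto some `d`-plane containing `η`), also `η'' ∈ S`. -/
def Saturated {𝕜 V : Type*} [RCLike 𝕜] [NormedAddCommGroup V]
    [InnerProductSpace 𝕜 V] [FiniteDimensional 𝕜 V] (r d : ℕ)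
    (S : Set (Submodule 𝕜 V)) : Prop :=
  ∀ η ∈ S, ∀ η' ∈ S, ∀ η'' : Submodule 𝕜 V, finrank 𝕜 η'' = r →
    (∃ π : Submodule 𝕜 V, finrank 𝕜 π = d ∧ η ≤ π ∧ η'' = η'.map (orthProj π)) →
    η'' ∈ S

lemma line_eq_span {V : Type*} [NormedAddCommGroup V] [InnerProductSpace ℝ V]
    [FiniteDimensional ℝ V] {ℓ : Submodule ℝ V} (h : finrank ℝ ℓ = 1) :
    ∃ u : V, u ≠ 0 ∧ ℓ = span ℝ {u} := by
  have h0 : ℓ ≠ ⊥ := by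
    intro hb; rw [hb] at h; simp [finrank_bot] at h
  obtain ⟨u, hu, hne⟩ := Submodule.exists_mem_ne_zero_of_ne_bot h0
  refine ⟨u, hne, ?_⟩
  exact (Submodule.eq_of_le_of_finrank_eq (by simpa [span_le] using hu)
    (by rw [finrank_span_singleton hne, h])).symm

/-- In a 3-dimensional real Hilbert space, a `τ₂`-saturated set of lines containing
two distinct lines contains two distinct non-orthogonal lines. -/
theorem saturated_has_nonorthogonal_pair {V : Type*} [NormedAddCommGroup V]
    [InnerProductSpace ℝ V] [FiniteDimensional ℝ V] (hV : finrank ℝ V = 3)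
    (S : Set (Submodule ℝ V)) (hSP : ∀ ℓ ∈ S, finrank ℝ ℓ = 1)
    (hsat : Saturated 1 2 S)
    (htwo : ∃ ℓ ∈ S, ∃ ℓ' ∈ S, ℓ ≠ ℓ') :
    ∃ ℓ ∈ S, ∃ ℓ' ∈ S, ℓ ≠ ℓ' ∧ ¬ ℓ ≤ ℓ'ᗮ := by
  obtain ⟨ℓ, hℓS, ℓ', hℓ'S, hne⟩ := htwo
  by_cases hor : ℓ ≤ ℓ'ᗮ
  swap
  · exact ⟨ℓ, hℓS, ℓ', hℓ'S, hne, hor⟩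
  obtain ⟨u, hu0, hℓ⟩ := line_eq_span (hSP ℓ hℓS)
  obtain ⟨v, hv0, hℓ'⟩ := line_eq_span (hSP ℓ' hℓ'S)
  have huℓ : u ∈ ℓ := hℓ ▸ subset_span rfl
  have hvℓ' : v ∈ ℓ' := hℓ' ▸ subset_span rfl
  have huv : ⟪u, v⟫ = 0 := inner_left_of_mem_orthogonal hvℓ' (hor huℓ)
  -- find z orthogonal to u, v with ‖z‖ = ‖v‖
  set K2 : Submodule ℝ V := span ℝ {u, v} with hK2
  have hK2top : K2 ≠ ⊤ := by
    intro htop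
    have h2 : finrank ℝ K2 ≤ 2 := by
      rw [hK2, show ({u, v} : Set V) = insert u {v} from rfl, Submodule.span_insert]
      refine le_trans (Submodule.finrank_add_le_finrank_add_finrank _ _) ?_
      have h1 : finrank ℝ (ℝ ∙ u) ≤ 1 := finrank_span_le_card ({u} : Set V)
      have h2 : finrank ℝ (ℝ ∙ v) ≤ 1 := finrank_span_le_card ({v} : Set V)
      omega
    rw [htop, finrank_top, hV] at h2
    omega
  have hK2bot : K2ᗮ ≠ ⊥ := fun h => hK2top (Submodule.orthogonal_eq_bot_iff.mp h)
  obtain ⟨z0, hz0K, hz00⟩ := Submodule.exists_mem_ne_zero_of_ne_bot hK2bot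
  set c : ℝ := ‖v‖ / ‖z0‖ with hc
  have hcne : c ≠ 0 := div_ne_zero (norm_ne_zero_iff.2 hv0) (norm_ne_zero_iff.2 hz00)
  set z : V := c • z0 with hzdef
  have hz0 : z ≠ 0 := smul_ne_zero hcne hz00
  have hzK : z ∈ K2ᗮ := Submodule.smul_mem _ _ hz0K
  have hnz : ‖z‖ = ‖v‖ := by
    rw [hzdef, norm_smul, hc, Real.norm_eq_abs, abs_div, abs_norm, abs_norm,
      div_mul_cancel₀ _ (norm_ne_zero_iff.2 hz00)]
  have hzu : ⟪z, u⟫ = 0 :=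
    inner_left_of_mem_orthogonal (subset_span (show u ∈ ({u, v} : Set V) by simp)) hzK
  have hzv : ⟪z, v⟫ = 0 :=
    inner_left_of_mem_orthogonal (subset_span (show v ∈ ({u, v} : Set V) by simp)) hzK
  have huz : ⟪u, z⟫ = 0 := by rw [real_inner_comm]; exact hzu
  have hvz : ⟪v, z⟫ = 0 := by rw [real_inner_comm]; exact hzv
  have hvv_zz : ⟪v, v⟫ = ⟪z, z⟫ := by
    rw [real_inner_self_eq_norm_sq, real_inner_self_eq_norm_sq, hnz]
  set w : V := v + z with hwdef
  have hw0 : w ≠ 0 := by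
    intro hw
    have : ⟪v, v⟫ = 0 := by
      have : ⟪v, w⟫ = 0 := by rw [hw, inner_zero_right]
      rwa [hwdef, inner_add_right, hvz, add_zero] at this
    exact hv0 (inner_self_eq_zero.mp this)
  have huw : ⟪u, w⟫ = 0 := by rw [hwdef, inner_add_right, huv, huz, add_zero]
  have hwu : ⟪w, u⟫ = 0 := by rw [real_inner_comm]; exact huw
  set π : Submodule ℝ V := span ℝ {u, w} with hπ
  have huπ : u ∈ π := subset_span (by simp)
  have hwπ : w ∈ π := subset_span (by simp)
  -- finrank π = 2
  have hli : LinearIndependent ℝ ![u, w] := by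
    rw [LinearIndependent.pair_iff]
    intro s t hst
    have h1 : s * ⟪u, u⟫ = 0 := by
      have := congrArg (fun x => ⟪u, x⟫) hst
      simpa [inner_add_right, inner_smul_right, huw] using this
    have hs : s = 0 := by
      rcases mul_eq_zero.mp h1 with h | h
      · exact h
      · exact absurd (inner_self_eq_zero.mp h) hu0
    have h2 : t * ⟪w, w⟫ = 0 := by
      have := congrArg (fun x => ⟪w, x⟫) hst
      simpa [inner_add_right, inner_smul_right, hwu] using this
    have ht : t = 0 := by
      rcases mul_eq_zero.mp h2 with h | h
      · exact h
      · exact absurd (inner_self_eq_zero.mp h) hw0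
    exact ⟨hs, ht⟩
  have hπ2 : finrank ℝ π = 2 := by
    have hr : Set.range ![u, w] = {u, w} := by
      ext x; simp [Matrix.range_cons, Matrix.range_empty, or_comm]
    have h := finrank_span_eq_card hli
    rw [hr] at h
    rw [hπ]
    simpa using h
  -- the projection of v onto π
  have hproj : (orthProj π) v = (2⁻¹ : ℝ) • w := by
    have hmem : (2⁻¹ : ℝ) • w ∈ π := Submodule.smul_mem _ _ hwπ
    have hperp : (2⁻¹ : ℝ) • (v - z) ∈ πᗮ := by
      rw [Submodule.mem_orthogonal]
      intro y hy
      rw [hπ, Submodule.mem_span_pair] at hy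
      obtain ⟨a, b, rfl⟩ := hy
      simp only [inner_add_left, inner_smul_left, inner_smul_right, inner_sub_right,
        hwdef, inner_add_right, huv, huz, hvz, hzv, hzu, real_inner_comm z v]
      simp only [RCLike.star_def, conj_trivial]
      rw [hvv_zz]
      ring
    have hsum : v = (2⁻¹ : ℝ) • w + (2⁻¹ : ℝ) • (v - z) := by
      rw [hwdef]; module
    have := Submodule.eq_starProjection_of_mem_orthogonal' (K := π) hmem hperp hsum
    exact this
  set ℓ'' : Submodule ℝ V := span ℝ {w} with hℓ''
  have hmap : ℓ'.map (orthProj π) = ℓ'' := by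
    rw [hℓ', Submodule.map_span, Set.image_singleton, hproj, hℓ'']
    have : (ℝ ∙ (2⁻¹ : ℝ) • w) = ℝ ∙ w :=
      Submodule.span_singleton_smul_eq (by norm_num : IsUnit (2⁻¹ : ℝ)) w
    exact this
  have hℓ''S : ℓ'' ∈ S := by
    refine hsat ℓ hℓS ℓ' hℓ'S ℓ'' ?_ ⟨π, hπ2, ?_, hmap.symm⟩
    · rw [hℓ'']; exact finrank_span_singleton hw0
    · rw [hℓ, span_le]; simpa using huπ
  refine ⟨ℓ', hℓ'S, ℓ'', hℓ''S, ?_, ?_⟩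
  · intro heq
    have : w ∈ ℓ' := heq ▸ subset_span rfl
    rw [hℓ', Submodule.mem_span_singleton] at this
    obtain ⟨a, ha⟩ := this
    have h1 : ⟪z, w⟫ = 0 := by
      rw [← ha, inner_smul_right, hzv, mul_zero]
    have h2 : ⟪z, w⟫ = ⟪z, z⟫ := by
      rw [hwdef, inner_add_right, hzv, zero_add]
    rw [h2] at h1
    exact hz0 (inner_self_eq_zero.mp h1)
  · intro hle
    have hv'' : v ∈ ℓ''ᗮ := hle hvℓ'
    have hvw : ⟪v, w⟫ = 0 :=
      inner_left_of_mem_orthogonal (Submodule.mem_span_singleton_self w) hv''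
    rw [hwdef, inner_add_right, hvz, add_zero] at hvw
    exact hv0 (inner_self_eq_zero.mp hvw)
end

section
/- Fix 1 ≤ r < d < n, an n-dimensional real or complex Hilbert space V, and a subspace π of V with 1 ≤ dim π ≤ r. Then the r-spine π↑ = { π' ∈ G(r,V) : π' ⊇ π } is τ_d-saturated: if η, η' ∈ π↑ and τ_d(η, η' ∣ η''), then η'' ∈ π↑. -/
open Module Submodule

/-- The `r`-spine `π↑` of a subspace `π` with `1 ≤ dim π ≤ r`, i.e. the set of
`r`-planes containing `π`, is `τ_d`-saturated. -/
theorem spine_saturated {𝕜 V : Type*} [RCLike 𝕜]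
    [NormedAddCommGroup V] [InnerProductSpace 𝕜 V] [FiniteDimensional 𝕜 V]
    (r d n : ℕ) (hr : 1 ≤ r) (hrd : r < d) (hdn : d < n) (hV : finrank 𝕜 V = n)
    (π : Submodule 𝕜 V) (hπ1 : 1 ≤ finrank 𝕜 π) (hπr : finrank 𝕜 π ≤ r) :
    Saturated r d {η : Submodule 𝕜 V | finrank 𝕜 η = r ∧ π ≤ η} := by
  rintro η ⟨hηr, hπη⟩ η' ⟨hη'r, hπη'⟩ η'' hη'' ⟨pt, hptd, hηpt, rfl⟩
  refine ⟨hη'', fun x hx => ?_⟩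
  refine ⟨x, hπη' hx, ?_⟩
  have hxpt : x ∈ pt := hηpt (hπη hx)
  simp [orthProj, Submodule.starProjection_eq_self_iff.mpr hxpt]
end

section
/- Let V be an n-dimensional real or complex Hilbert space with n ≥ 3, let 1 < d < n−1, and suppose that every τ_d-saturated subset of ℙ(H) containing two distinct lines equals ℙ(H) for every (n−1)-dimensional Hilbert space H. Then every τ_{d+1}-saturated subset of ℙ(V) containing two distinct lines equals ℙ(V). (Induction step: 𝒫_{d,n} ⟹ 𝒫_{d+1,n+1}.) -/
open Module Submodule

section Aux

variable {𝕜 V : Type*} [RCLike 𝕜] [NormedAddCommGroup V]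
    [InnerProductSpace 𝕜 V] [FiniteDimensional 𝕜 V]

/-- Projection onto `π ⊕ Hᗮ` agrees on `H` with the projection onto `π` computed inside `H`. -/
lemma orthProj_sup_orthogonal (H : Submodule 𝕜 V) (π : Submodule 𝕜 ↥H) {v : V} (hv : v ∈ H) :
    orthProj (π.map H.subtype ⊔ Hᗮ) v = H.subtype (orthProj π ⟨v, hv⟩) := by
  apply Submodule.eq_starProjection_of_mem_of_inner_eq_zero
  · exact Submodule.mem_sup_left
      (Submodule.mem_map_of_mem (orthogonalProjection π ⟨v, hv⟩).2)
  · intro w hw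
    obtain ⟨a, ha, b, hb, rfl⟩ := Submodule.mem_sup.1 hw
    rw [inner_add_right]
    obtain ⟨a', ha', rfl⟩ := ha
    have h1 : (inner 𝕜 (v - (H.subtype (orthProj π ⟨v, hv⟩))) (H.subtype a') : 𝕜) = 0 := by
      have := Submodule.starProjection_inner_eq_zero (K := π) ⟨v, hv⟩ a' ha'
      rw [Submodule.coe_inner] at this
      simpa [orthProj] using this
    have h2 : (inner 𝕜 (v - (H.subtype (orthProj π ⟨v, hv⟩))) b : 𝕜) = 0 := by
      have hmem : v - (H.subtype (orthProj π ⟨v, hv⟩)) ∈ H :=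
        H.sub_mem hv (orthProj π ⟨v, hv⟩).2
      exact hb _ hmem
    rw [h1, h2, add_zero]

lemma map_orthProj_restrict (H : Submodule 𝕜 V) (π : Submodule 𝕜 ↥H) (ℓ' : Submodule 𝕜 ↥H) :
    (ℓ'.map H.subtype).map (orthProj (π.map H.subtype ⊔ Hᗮ))
      = (ℓ'.map (orthProj π)).map H.subtype := by
  rw [← Submodule.map_comp, ← Submodule.map_comp]
  congr 1
  ext x
  simp only [LinearMap.comp_apply]
  exact orthProj_sup_orthogonal H π x.2

lemma exists_hyperplane (W : Submodule 𝕜 V) (h : finrank 𝕜 W < finrank 𝕜 V) :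
    ∃ H : Submodule 𝕜 V, W ≤ H ∧ finrank 𝕜 ↥H = finrank 𝕜 V - 1 := by
  have hne : Wᗮ ≠ ⊥ := by
    intro h0
    have := W.finrank_add_finrank_orthogonal
    rw [h0, finrank_bot] at this
    omega
  obtain ⟨u, hu, hune⟩ := Submodule.exists_mem_ne_zero_of_ne_bot hne
  refine ⟨(𝕜 ∙ u)ᗮ, ?_, ?_⟩
  · intro w hw
    rw [Submodule.mem_orthogonal]
    intro x hx
    obtain ⟨c, rfl⟩ := Submodule.mem_span_singleton.1 hx
    have h0 : (inner 𝕜 u w : 𝕜) = 0 := inner_eq_zero_symm.1 (hu w hw)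
    rw [inner_smul_left, h0, mul_zero]
  · have h1 : finrank 𝕜 (𝕜 ∙ u) = 1 := finrank_span_singleton hune
    have := (𝕜 ∙ u).finrank_add_finrank_orthogonal
    omega

end Aux

/-- Induction step `𝒫_{d,n-1} ⟹ 𝒫_{d+1,n}`: if over every `(n-1)`-dimensional
Hilbert space every `τ_d`-saturated set of lines with two distinct members is all
of `ℙ`, then over an `n`-dimensional Hilbert space every `τ_{d+1}`-saturated set
of lines with two distinct members is all of `ℙ`. -/
theorem saturation_induction_step (𝕜 : Type) [RCLike 𝕜] (V : Type)
    [NormedAddCommGroup V] [InnerProductSpace 𝕜 V] [FiniteDimensional 𝕜 V]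
    (n d : ℕ) (hn : 3 ≤ n) (hd : 1 < d) (hdn : d < n - 1) (hV : finrank 𝕜 V = n)
    (IH : ∀ (H : Type) [NormedAddCommGroup H] [InnerProductSpace 𝕜 H]
        [FiniteDimensional 𝕜 H], finrank 𝕜 H = n - 1 →
      ∀ S : Set (Submodule 𝕜 H), (∀ ℓ ∈ S, finrank 𝕜 ℓ = 1) →
        Saturated 1 d S → (∃ ℓ ∈ S, ∃ ℓ' ∈ S, ℓ ≠ ℓ') →
        S = {ℓ : Submodule 𝕜 H | finrank 𝕜 ℓ = 1}) :
    ∀ S : Set (Submodule 𝕜 V), (∀ ℓ ∈ S, finrank 𝕜 ℓ = 1) →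
      Saturated 1 (d + 1) S → (∃ ℓ ∈ S, ∃ ℓ' ∈ S, ℓ ≠ ℓ') →
      S = {ℓ : Submodule 𝕜 V | finrank 𝕜 ℓ = 1} := by
  rintro S hS hSat ⟨ℓ₁, hℓ₁, ℓ₂, hℓ₂, hne⟩
  ext ℓ
  simp only [Set.mem_setOf_eq]
  refine ⟨hS ℓ, fun hℓ => ?_⟩
  -- find hyperplane containing ℓ₁, ℓ₂, ℓ
  have hsup : ∀ s t : Submodule 𝕜 V, finrank 𝕜 ↥(s ⊔ t) ≤ finrank 𝕜 s + finrank 𝕜 t := by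
    intro s t
    have := Submodule.finrank_sup_add_finrank_inf_eq s t
    omega
  have hW : finrank 𝕜 ↥(ℓ₁ ⊔ ℓ₂ ⊔ ℓ) < finrank 𝕜 V := by
    have h1 := hsup (ℓ₁ ⊔ ℓ₂) ℓ
    have h2 := hsup ℓ₁ ℓ₂
    have := hS ℓ₁ hℓ₁
    have := hS ℓ₂ hℓ₂
    omega
  obtain ⟨H, hWH, hHrank⟩ := exists_hyperplane (ℓ₁ ⊔ ℓ₂ ⊔ ℓ) hW
  rw [hV] at hHrank
  -- the restricted set
  set T : Set (Submodule 𝕜 ↥H) := {m | m.map H.subtype ∈ S} with hT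
  have hTlines : ∀ m ∈ T, finrank 𝕜 m = 1 := by
    intro m hm
    have := hS _ hm
    rwa [Submodule.finrank_map_subtype_eq] at this
  have hTsat : Saturated 1 d T := by
    rintro η hη η' hη' η'' hrank ⟨π, hπd, hle, heq⟩
    have hdisj : Disjoint (π.map H.subtype) Hᗮ :=
      H.orthogonal_disjoint.mono_left (Submodule.map_subtype_le H π)
    have hHperp : finrank 𝕜 ↥Hᗮ = 1 := by
      have := H.finrank_add_finrank_orthogonal
      omega
    have hrank' : finrank 𝕜 ↥(π.map H.subtype ⊔ Hᗮ) = d + 1 := by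
      have := Submodule.finrank_sup_add_finrank_inf_eq (π.map H.subtype) Hᗮ
      rw [disjoint_iff.1 hdisj, finrank_bot] at this
      rw [Submodule.finrank_map_subtype_eq, hπd] at this
      omega
    refine hSat _ hη _ hη' _ (by rwa [Submodule.finrank_map_subtype_eq])
      ⟨π.map H.subtype ⊔ Hᗮ, hrank', ?_, ?_⟩
    · exact le_trans (Submodule.map_mono hle) le_sup_left
    · rw [heq, ← map_orthProj_restrict]
  have hm₁ : (ℓ₁.comap H.subtype).map H.subtype = ℓ₁ := by
    rw [Submodule.map_comap_subtype]
    exact inf_eq_right.2 (le_trans (le_trans le_sup_left le_sup_left) hWH)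
  have hm₂ : (ℓ₂.comap H.subtype).map H.subtype = ℓ₂ := by
    rw [Submodule.map_comap_subtype]
    exact inf_eq_right.2 (le_trans (le_trans le_sup_right le_sup_left) hWH)
  have hmℓ : (ℓ.comap H.subtype).map H.subtype = ℓ := by
    rw [Submodule.map_comap_subtype]
    exact inf_eq_right.2 (le_trans le_sup_right hWH)
  have hTne : ∃ m ∈ T, ∃ m' ∈ T, m ≠ m' := by
    refine ⟨ℓ₁.comap H.subtype, by rwa [hT, Set.mem_setOf_eq, hm₁],
      ℓ₂.comap H.subtype, by rwa [hT, Set.mem_setOf_eq, hm₂], ?_⟩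
    intro h
    apply hne
    rw [← hm₁, h, hm₂]
  have hall := IH ↥H hHrank T hTlines hTsat hTne
  have hℓT : ℓ.comap H.subtype ∈ T := by
    rw [hall, Set.mem_setOf_eq]
    have := Submodule.finrank_map_subtype_eq H (ℓ.comap H.subtype)
    rw [hmℓ] at this
    omega
  rwa [hT, Set.mem_setOf_eq, hmℓ] at hℓT
end
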